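/- Let n ≥ 1 and suppose the real n×n matrix A has a singular value decomposition A = U · diag(s) · Vᵀ with U, V ∈ O(n) and s : Fin n → ℝ satisfying s i ≥ 0 for all i and s antitone (s i ≥ s j whenever i ≤ j, so s_n is the smallest singular value). Let D be the diagonal matrix with diagonal entries (1, …, 1, −1), and assume det(A) > 0. Then U D Vᵀ is orthogonal with det(U D Vᵀ) = −1, ‖U D Vᵀ − A‖_F² = Σ_{i=1}^n (s_i − 1)² + 4 s_n, and for every orthogonal C with det(C) = −1, ‖C − A‖_F² ≥ Σ_{i=1}^n (s_i − 1)² + 4 s_n. -/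

import Mathlib

/-!
Conjugating by the orthogonal factors of the SVD, `‖C - A‖_F² = n + Σ sᵢ² - 2 Σ sᵢ Wᵢᵢ` for the
orthogonal matrix `W = Uᵀ C V`, which has determinant `-1` exactly when `C` does. Every diagonal
entry of an orthogonal matrix is at most `1`, and one with determinant `-1` has an eigenvector `x`
for `-1`; composing with the reflection in `x` gives an orthogonal matrix of trace `tr W + 2 ≤ n`.
So the defects `1 - Wᵢᵢ` are nonnegative with sum at least `2`, and the weighted sum
`Σ sᵢ (1 - Wᵢᵢ)` is smallest when the whole defect `2` sits on the smallest weight `sₙ`,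
which is what `W = D` achieves.
-/

open Matrix

/-- The Frobenius norm of a real square matrix: `‖A‖_F = (trace (Aᵀ * A))^(1/2)`. -/
noncomputable def frobNorm {n : ℕ} (A : Matrix (Fin n) (Fin n) ℝ) : ℝ :=
  Real.sqrt (Matrix.trace (Aᵀ * A))

namespace Matrix

variable {ι R : Type*} [Fintype ι] [DecidableEq ι]

lemma transpose_mul_self_mul_eq_one [CommSemiring R] {A B : Matrix ι ι R}
    (hA : Aᵀ * A = 1) (hB : Bᵀ * B = 1) : (A * B)ᵀ * (A * B) = 1 := by
  rw [transpose_mul, Matrix.mul_assoc, ← Matrix.mul_assoc Aᵀ, hA, Matrix.one_mul, hB]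

lemma transpose_transpose_mul_transpose_eq_one [CommSemiring R] {U : Matrix ι ι R}
    (hU : Uᵀ * U = 1) : Uᵀᵀ * Uᵀ = 1 := by
  rw [transpose_transpose, mul_eq_one_comm.mp hU]

lemma transpose_mul_self_conj_eq_one [CommSemiring R] {U C V : Matrix ι ι R}
    (hU : Uᵀ * U = 1) (hC : Cᵀ * C = 1) (hV : Vᵀ * V = 1) :
    (Uᵀ * C * V)ᵀ * (Uᵀ * C * V) = 1 :=
  transpose_mul_self_mul_eq_one
    (transpose_mul_self_mul_eq_one (transpose_transpose_mul_transpose_eq_one hU) hC) hV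

lemma det_mul_self_eq_one_of_transpose_mul_self_eq_one [CommRing R] {W : Matrix ι ι R}
    (hW : Wᵀ * W = 1) : W.det * W.det = 1 := by
  simpa using congr_arg det hW

lemma trace_conj_transpose_mul_self [CommSemiring R] {U V : Matrix ι ι R}
    (hU : Uᵀ * U = 1) (hV : V * Vᵀ = 1) (M : Matrix ι ι R) :
    trace ((U * M * V)ᵀ * (U * M * V)) = trace (Mᵀ * M) := by
  calc trace ((U * M * V)ᵀ * (U * M * V)) = trace (Vᵀ * (Mᵀ * M) * V) := by
        simp only [transpose_mul, Matrix.mul_assoc]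
        rw [← Matrix.mul_assoc Uᵀ, hU, Matrix.one_mul]
    _ = trace (Mᵀ * M) := by rw [trace_mul_cycle, hV, Matrix.one_mul]

lemma trace_transpose_mul_self_sub_diagonal [CommRing R] {W : Matrix ι ι R}
    (hW : Wᵀ * W = 1) (s : ι → R) :
    trace ((W - diagonal s)ᵀ * (W - diagonal s)) =
      Fintype.card ι + ∑ i, s i ^ 2 - 2 * ∑ i, s i * W i i := by
  have hsW : trace (diagonal s * W) = ∑ i, s i * W i i := by simp [trace, diagonal_mul]
  have hWs : trace (Wᵀ * diagonal s) = ∑ i, s i * W i i := by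
    rw [← trace_transpose, transpose_mul, diagonal_transpose, transpose_transpose, hsW]
  rw [transpose_sub, sub_mul, mul_sub, mul_sub, trace_sub, trace_sub, trace_sub, hW, hWs,
    diagonal_transpose, hsW, diagonal_mul_diagonal, trace_one, trace_diagonal]
  simp only [sq]
  ring

lemma diag_le_one_of_transpose_mul_self_eq_one {W : Matrix ι ι ℝ} (hW : Wᵀ * W = 1) (i : ι) :
    W i i ≤ 1 := by
  have hcol : ∑ j, W j i ^ 2 = 1 := by
    simpa [mul_apply, sq] using congr_fun (congr_fun hW i) i
  have := Finset.single_le_sum (fun j _ => sq_nonneg (W j i)) (Finset.mem_univ i)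
  nlinarith

lemma trace_le_card_of_transpose_mul_self_eq_one {W : Matrix ι ι ℝ} (hW : Wᵀ * W = 1) :
    trace W ≤ Fintype.card ι := by
  calc trace W = ∑ i, W i i := rfl
    _ ≤ ∑ _i : ι, 1 := Finset.sum_le_sum fun i _ => diag_le_one_of_transpose_mul_self_eq_one hW i
    _ = Fintype.card ι := by simp

lemma exists_mulVec_eq_neg_self_of_det_eq_neg_one {W : Matrix ι ι ℝ} (hW : Wᵀ * W = 1)
    (hd : W.det = -1) : ∃ x ≠ 0, W *ᵥ x = -x := by
  have hdet : (W + 1).det = 0 := by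
    have h : W * (1 + W)ᵀ = W + 1 := by
      rw [transpose_add, transpose_one, mul_add, mul_one, mul_eq_one_comm.mp hW, add_comm]
    have := congr_arg det h
    rw [det_mul, det_transpose, hd, add_comm 1 W] at this
    linarith
  obtain ⟨x, hx, hWx⟩ := exists_mulVec_eq_zero_iff.mpr hdet
  exact ⟨x, hx, by rwa [add_mulVec, one_mulVec, add_eq_zero_iff_eq_neg] at hWx⟩

noncomputable def householder (x : ι → ℝ) : Matrix ι ι ℝ := 1 - (2 / (x ⬝ᵥ x)) • vecMulVec x x

lemma transpose_householder (x : ι → ℝ) : (householder x)ᵀ = householder x := by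
  simp [householder, transpose_vecMulVec]

lemma householder_mul_self {x : ι → ℝ} (hx : x ≠ 0) : householder x * householder x = 1 := by
  have hxx : x ⬝ᵥ x ≠ 0 := by simpa using hx
  simp only [householder, sub_mul, mul_sub, Matrix.one_mul, Matrix.mul_one, Matrix.smul_mul,
    Matrix.mul_smul, vecMulVec_mul_vecMulVec, vecMulVec_smul, smul_smul]
  have : 2 / x ⬝ᵥ x * (2 / x ⬝ᵥ x * x ⬝ᵥ x) = 2 * (2 / x ⬝ᵥ x) := by field_simp
  rw [this]
  module

lemma trace_mul_householder (W : Matrix ι ι ℝ) (x : ι → ℝ) :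
    trace (W * householder x) = trace W - 2 * ((W *ᵥ x) ⬝ᵥ x) / (x ⬝ᵥ x) := by
  simp only [householder, mul_sub, Matrix.mul_one, Matrix.mul_smul, mul_vecMulVec, trace_sub,
    trace_smul, trace_vecMulVec, smul_eq_mul]
  ring

lemma trace_le_card_sub_two_of_det_eq_neg_one {W : Matrix ι ι ℝ} (hW : Wᵀ * W = 1)
    (hd : W.det = -1) : trace W ≤ Fintype.card ι - 2 := by
  obtain ⟨x, hx, hWx⟩ := exists_mulVec_eq_neg_self_of_det_eq_neg_one hW hd
  have hxx : x ⬝ᵥ x ≠ 0 := by simpa using hx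
  have hH : (householder x)ᵀ * householder x = 1 := by
    rw [transpose_householder, householder_mul_self hx]
  have := trace_le_card_of_transpose_mul_self_eq_one (transpose_mul_self_mul_eq_one hW hH)
  rw [trace_mul_householder, hWx, neg_dotProduct, mul_neg, neg_div, mul_div_assoc,
    div_self hxx] at this
  linarith

lemma sum_mul_diag_le_of_det_eq_neg_one {W : Matrix ι ι ℝ} (hW : Wᵀ * W = 1) (hd : W.det = -1)
    {s : ι → ℝ} {m : ι} (hm : 0 ≤ s m) (hmin : ∀ i, s m ≤ s i) :
    ∑ i, s i * W i i ≤ ∑ i, s i - 2 * s m := by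
  have htr := trace_le_card_sub_two_of_det_eq_neg_one hW hd
  calc ∑ i, s i * W i i = ∑ i, s i - ∑ i, s i * (1 - W i i) := by
        simp only [mul_sub, mul_one, Finset.sum_sub_distrib, sub_sub_cancel]
    _ ≤ ∑ i, s i - ∑ i, s m * (1 - W i i) := by
        gcongr with i
        · linarith [diag_le_one_of_transpose_mul_self_eq_one hW i]
        · exact hmin i
    _ = ∑ i, s i - s m * (Fintype.card ι - trace W) := by
        simp [← Finset.mul_sum, trace]
    _ ≤ ∑ i, s i - 2 * s m := by nlinarith

lemma det_mul_det_eq_one_of_det_pos {U V : Matrix ι ι ℝ} (hU : Uᵀ * U = 1) (hV : Vᵀ * V = 1)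
    {s : ι → ℝ} (hs : ∀ i, 0 ≤ s i) (h : 0 < (U * diagonal s * Vᵀ).det) : U.det * V.det = 1 := by
  rw [det_mul, det_mul, det_diagonal, det_transpose, mul_right_comm] at h
  have hpos : 0 < U.det * V.det := pos_of_mul_pos_left h (Finset.prod_nonneg fun i _ => hs i)
  have hsq : (U.det * V.det) * (U.det * V.det) = 1 := by
    linear_combination V.det * V.det * det_mul_self_eq_one_of_transpose_mul_self_eq_one hU +
      det_mul_self_eq_one_of_transpose_mul_self_eq_one hV
  rcases mul_self_eq_one_iff.mp hsq with h1 | h1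
  · exact h1
  · linarith

variable [CommRing R]

lemma transpose_mul_self_diagonal_ite (m : ι) :
    (diagonal fun i => if i = m then -1 else 1 : Matrix ι ι R)ᵀ *
      diagonal (fun i => if i = m then -1 else 1) = 1 := by
  rw [diagonal_transpose, diagonal_mul_diagonal, ← diagonal_one]
  congr 1
  ext i
  split_ifs <;> simp

lemma det_diagonal_ite (m : ι) :
    (diagonal fun i => if i = m then -1 else 1 : Matrix ι ι R).det = -1 := by
  rw [det_diagonal, Fintype.prod_ite_eq']

lemma sum_mul_ite (s : ι → R) (m : ι) :
    ∑ i, s i * (if i = m then -1 else 1) = ∑ i, s i - 2 * s m := by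
  have : ∀ i, s i * (if i = m then -1 else 1) = s i - if i = m then 2 * s i else 0 := by
    intro i; split_ifs <;> ring
  simp [this, Finset.sum_sub_distrib]

end Matrix

lemma frobNorm_sq {n : ℕ} (M : Matrix (Fin n) (Fin n) ℝ) : frobNorm M ^ 2 = trace (Mᵀ * M) :=
  Real.sq_sqrt <| by
    simpa [trace, mul_apply] using
      Finset.sum_nonneg fun i _ => Finset.sum_nonneg fun j _ => mul_self_nonneg (M j i)

lemma frobNorm_sub_sq_of_svd {n : ℕ} {U V C : Matrix (Fin n) (Fin n) ℝ} (hU : Uᵀ * U = 1)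
    (hV : Vᵀ * V = 1) (hC : Cᵀ * C = 1) (s : Fin n → ℝ) :
    frobNorm (C - U * diagonal s * Vᵀ) ^ 2 =
      n + ∑ i, s i ^ 2 - 2 * ∑ i, s i * (Uᵀ * C * V) i i := by
  have hCA : C - U * diagonal s * Vᵀ = U * (Uᵀ * C * V - diagonal s) * Vᵀ := by
    rw [mul_sub, sub_mul]
    simp only [← Matrix.mul_assoc, mul_eq_one_comm.mp hU, Matrix.one_mul]
    rw [Matrix.mul_assoc C, mul_eq_one_comm.mp hV, Matrix.mul_one]
  rw [frobNorm_sq, hCA, trace_conj_transpose_mul_self hU (by rwa [transpose_transpose]),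
    trace_transpose_mul_self_sub_diagonal (transpose_mul_self_conj_eq_one hU hC hV),
    Fintype.card_fin]

/-- If `A = U diag(s) Vᵀ` is an SVD with `s` nonnegative and antitone and
`det A > 0`, and `D = diag(1,…,1,-1)`, then `U D Vᵀ` is orthogonal with determinant `-1`,
`‖U D Vᵀ - A‖_F² = Σᵢ (sᵢ-1)² + 4 sₙ`, and every orthogonal `C` with `det C = -1`
satisfies `‖C - A‖_F² ≥ Σᵢ (sᵢ-1)² + 4 sₙ`. -/
theorem projection_onto_SOneg (n : ℕ) (hn : 0 < n)
    (A U V : Matrix (Fin n) (Fin n) ℝ) (s : Fin n → ℝ)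
    (hU : Uᵀ * U = 1) (hV : Vᵀ * V = 1) (hs : ∀ i, 0 ≤ s i) (hmono : Antitone s)
    (hA : A = U * Matrix.diagonal s * Vᵀ) (hdet : 0 < A.det)
    (D : Matrix (Fin n) (Fin n) ℝ)
    (hD : D = Matrix.diagonal (fun i : Fin n => if (i : ℕ) = n - 1 then (-1 : ℝ) else 1)) :
    ((U * D * Vᵀ)ᵀ * (U * D * Vᵀ) = 1) ∧
    (U * D * Vᵀ).det = -1 ∧
    frobNorm (U * D * Vᵀ - A) ^ 2 = (∑ i, (s i - 1) ^ 2) + 4 * s ⟨n - 1, by omega⟩ ∧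
    ∀ C : Matrix (Fin n) (Fin n) ℝ, Cᵀ * C = 1 → C.det = -1 →
      (∑ i, (s i - 1) ^ 2) + 4 * s ⟨n - 1, by omega⟩ ≤ frobNorm (C - A) ^ 2 := by
  set m : Fin n := ⟨n - 1, by omega⟩
  replace hD : D = diagonal fun i => if i = m then -1 else 1 := by simp [hD, m, Fin.ext_iff]
  have hUV : U.det * V.det = 1 := det_mul_det_eq_one_of_det_pos hU hV hs (hA ▸ hdet)
  have hsq : ∑ i, (s i - 1) ^ 2 = n + ∑ i, s i ^ 2 - 2 * ∑ i, s i := by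
    simp only [sub_sq, mul_one, one_pow, Finset.sum_add_distrib, Finset.sum_sub_distrib,
      Finset.sum_const, Finset.card_univ, Fintype.card_fin, nsmul_eq_mul, Finset.mul_sum]
    ring
  have hUDV : (U * D * Vᵀ)ᵀ * (U * D * Vᵀ) = 1 := transpose_mul_self_mul_eq_one
    (transpose_mul_self_mul_eq_one hU (hD ▸ transpose_mul_self_diagonal_ite m))
    (transpose_transpose_mul_transpose_eq_one hV)
  refine ⟨hUDV, ?_, ?_, fun C hC hCdet => ?_⟩
  · rw [det_mul, det_mul, det_transpose, hD, det_diagonal_ite]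
    linear_combination -hUV
  · have hW : Uᵀ * (U * D * Vᵀ) * V = D := by
      simp only [Matrix.mul_assoc, hV, Matrix.mul_one]
      rw [← Matrix.mul_assoc, hU, Matrix.one_mul]
    rw [hA, frobNorm_sub_sq_of_svd hU hV hUDV, hW, hD]
    simp only [diagonal_apply_eq]
    rw [sum_mul_ite, hsq]
    ring
  · have hWdet : (Uᵀ * C * V).det = -1 := by
      rw [det_mul, det_mul, det_transpose, hCdet]
      linear_combination -hUV
    have hmin : ∀ i, s m ≤ s i := fun i => hmono (Fin.le_def.mpr (Nat.le_sub_one_of_lt i.isLt))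
    rw [hA, frobNorm_sub_sq_of_svd hU hV hC, hsq]
    linarith [sum_mul_diag_le_of_det_eq_neg_one (transpose_mul_self_conj_eq_one hU hC hV) hWdet
      (hs m) hmin]
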